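/- arXiv:2105.13320 — 4 statements merged into one kernel-verified Lean document; each statement's English description precedes it below -/
import Mathlib

section
/- Let T > 0, μ, a ∈ ℝ, and let f : ℝ → ℝ be 1-Lipschitz and integrable with respect to N(0, T), N(μT, T) and N(aT, T). Then |∫ f(x)·exp(−μx + μ²T/2) dN(μT, T)(x) − ∫ f(x)·exp(−ax + a²T/2) dN(aT, T)(x)| ≤ |∫ f dN(μT, T) − ∫ f dN(aT, T)|. (Both risk-neutral expectations equal ∫ f dN(0, T), so the left-hand side is 0; this is the paper's conjectured bound, proved for Brownian motion with drift: the difference of option prices under the equivalent martingale measures is bounded by the difference of expectations under the natural measures.) -/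
open MeasureTheory ProbabilityTheory Real
open scoped NNReal ENNReal

lemma gauss_integral_density (m : ℝ) (v : ℝ≥0) (hv : v ≠ 0) (g : ℝ → ℝ) :
    ∫ x, g x ∂(gaussianReal m v) = ∫ x, gaussianPDFReal m v x * g x := by
  rw [gaussianReal_of_var_ne_zero _ hv, gaussianPDF_def]
  have h : (fun x => ENNReal.ofReal (gaussianPDFReal m v x))
      = fun x => ((gaussianPDFReal m v x).toNNReal : ℝ≥0∞) := rfl
  rw [h, integral_withDensity_eq_integral_smul
    ((measurable_gaussianPDFReal m v).real_toNNReal) g]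
  congr 1
  ext x
  simp [NNReal.smul_def, Real.coe_toNNReal _ (gaussianPDFReal_nonneg m v x)]

lemma riskNeutral_eq (T : ℝ) (hT : 0 < T) (μ : ℝ) (f : ℝ → ℝ) :
    ∫ x, f x * Real.exp (-μ * x + μ ^ 2 * T / 2) ∂(gaussianReal (μ * T) T.toNNReal)
      = ∫ x, f x ∂(gaussianReal 0 T.toNNReal) := by
  have hv : T.toNNReal ≠ 0 := by
    simp [Real.toNNReal_eq_zero, not_le, hT]
  rw [gauss_integral_density _ _ hv, gauss_integral_density _ _ hv]
  congr 1
  ext x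
  have hvT : ((T.toNNReal : ℝ)) = T := Real.coe_toNNReal _ hT.le
  simp only [gaussianPDFReal, hvT]
  rw [mul_comm (f x), ← mul_assoc, mul_assoc _ _ (Real.exp _), ← Real.exp_add]
  congr 2
  field_simp
  ring

/-- The paper's conjectured bound, for Brownian motion with constant drift: for a
1-Lipschitz function `f`, the difference of the risk-neutral expectations (computed via
the fixed-time Girsanov densities) of `f` at time `T` for drifts `μ` and `a` is bounded
by the difference of the expectations of `f` under the natural laws `N(μT, T)` and
`N(aT, T)`. -/
theorem riskNeutral_diff_le_natural_diff (T : ℝ) (hT : 0 < T) (μ a : ℝ) (f : ℝ → ℝ)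
    (hf_lip : LipschitzWith 1 f)
    (hf_int0 : Integrable f (gaussianReal 0 T.toNNReal))
    (hf_intμ : Integrable f (gaussianReal (μ * T) T.toNNReal))
    (hf_inta : Integrable f (gaussianReal (a * T) T.toNNReal)) :
    |(∫ x, f x * Real.exp (-μ * x + μ ^ 2 * T / 2) ∂(gaussianReal (μ * T) T.toNNReal))
        - ∫ x, f x * Real.exp (-a * x + a ^ 2 * T / 2) ∂(gaussianReal (a * T) T.toNNReal)|
      ≤ |(∫ x, f x ∂(gaussianReal (μ * T) T.toNNReal))
          - ∫ x, f x ∂(gaussianReal (a * T) T.toNNReal)| := by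
  rw [riskNeutral_eq T hT μ f, riskNeutral_eq T hT a f, sub_self, abs_zero]
  exact abs_nonneg _
end

section
/- Let μ and ν be probability measures on ℝ and let γ be a coupling of μ and ν, i.e., a probability measure on ℝ × ℝ whose first marginal is μ and whose second marginal is ν. Then ∫ |x − y| dγ(x, y) ≥ ∫ℝ |F_μ(t) − F_ν(t)| dt, where F_μ and F_ν are the cumulative distribution functions of μ and ν. Consequently the Wasserstein-1 distance satisfies W₁(μ, ν) ≥ ∫ℝ |F_μ(t) − F_ν(t)| dt. -/
open MeasureTheory ProbabilityTheory
open scoped ENNReal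

lemma coupling_fubini_aux (γ : Measure (ℝ × ℝ)) [IsProbabilityMeasure γ] :
    (∫⁻ t, γ {p : ℝ × ℝ | p.1 ≤ t ∧ t < p.2}) =
      ∫⁻ p, ENNReal.ofReal (p.2 - p.1) ∂γ := by
  set S : Set (ℝ × (ℝ × ℝ)) := {x | x.2.1 ≤ x.1 ∧ x.1 < x.2.2} with hSdef
  have hS : MeasurableSet S :=
    (measurableSet_le measurable_snd.fst measurable_fst).inter
      (measurableSet_lt measurable_fst measurable_snd.snd)
  have h1 : ∀ t, γ {p : ℝ × ℝ | p.1 ≤ t ∧ t < p.2}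
      = ∫⁻ p, S.indicator (fun _ => (1 : ℝ≥0∞)) (t, p) ∂γ := by
    intro t
    have heq : (fun p : ℝ × ℝ => S.indicator (fun _ => (1 : ℝ≥0∞)) (t, p))
        = Set.indicator {p : ℝ × ℝ | p.1 ≤ t ∧ t < p.2} (fun _ => 1) := by
      funext p; simp [hSdef, Set.indicator_apply]
    rw [heq]
    exact (lintegral_indicator_one ((measurableSet_le measurable_fst measurable_const).inter
      (measurableSet_lt measurable_const measurable_snd))).symm
  simp_rw [h1]
  rw [lintegral_lintegral_swap (f := fun t (p : ℝ × ℝ) => S.indicator (fun _ => (1 : ℝ≥0∞)) (t, p)) ((measurable_const.indicator hS).aemeasurable)]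
  refine lintegral_congr fun p => ?_
  have heq : (fun t : ℝ => S.indicator (fun _ => (1 : ℝ≥0∞)) (t, p))
      = Set.indicator (Set.Ico p.1 p.2) (fun _ => 1) := by
    funext t; simp [hSdef, Set.indicator_apply, Set.mem_Ico]
  rw [heq]
  exact (lintegral_indicator_one measurableSet_Ico).trans Real.volume_Ico

lemma coupling_fubini_aux' (γ : Measure (ℝ × ℝ)) [IsProbabilityMeasure γ] :
    (∫⁻ t, γ {p : ℝ × ℝ | p.2 ≤ t ∧ t < p.1}) =
      ∫⁻ p, ENNReal.ofReal (p.1 - p.2) ∂γ := by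
  set S : Set (ℝ × (ℝ × ℝ)) := {x | x.2.2 ≤ x.1 ∧ x.1 < x.2.1} with hSdef
  have hS : MeasurableSet S :=
    (measurableSet_le measurable_snd.snd measurable_fst).inter
      (measurableSet_lt measurable_fst measurable_snd.fst)
  have h1 : ∀ t, γ {p : ℝ × ℝ | p.2 ≤ t ∧ t < p.1}
      = ∫⁻ p, S.indicator (fun _ => (1 : ℝ≥0∞)) (t, p) ∂γ := by
    intro t
    have heq : (fun p : ℝ × ℝ => S.indicator (fun _ => (1 : ℝ≥0∞)) (t, p))
        = Set.indicator {p : ℝ × ℝ | p.2 ≤ t ∧ t < p.1} (fun _ => 1) := by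
      funext p; simp [hSdef, Set.indicator_apply]
    rw [heq]
    exact (lintegral_indicator_one ((measurableSet_le measurable_snd measurable_const).inter
      (measurableSet_lt measurable_const measurable_fst))).symm
  simp_rw [h1]
  rw [lintegral_lintegral_swap (f := fun t (p : ℝ × ℝ) => S.indicator (fun _ => (1 : ℝ≥0∞)) (t, p)) ((measurable_const.indicator hS).aemeasurable)]
  refine lintegral_congr fun p => ?_
  have heq : (fun t : ℝ => S.indicator (fun _ => (1 : ℝ≥0∞)) (t, p))
      = Set.indicator (Set.Ico p.2 p.1) (fun _ => 1) := by
    funext t; simp [hSdef, Set.indicator_apply, Set.mem_Ico]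
  rw [heq]
  exact (lintegral_indicator_one measurableSet_Ico).trans Real.volume_Ico

/-- One half of the 1-dimensional Wasserstein identity: for any coupling `γ` of
probability measures `μ` and `ν` on `ℝ`, the transport cost `∫ |x - y| dγ` is at least
the `L¹` distance `∫ |F_μ(t) - F_ν(t)| dt` between the cumulative distribution
functions; consequently `W₁(μ, ν) ≥ ∫ |F_μ - F_ν|`. -/
theorem coupling_cost_ge_cdf_l1
    (μ ν : Measure ℝ) [IsProbabilityMeasure μ] [IsProbabilityMeasure ν]
    (γ : Measure (ℝ × ℝ)) [IsProbabilityMeasure γ]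
    (hγ₁ : γ.map Prod.fst = μ) (hγ₂ : γ.map Prod.snd = ν) :
    (∫⁻ t, ENNReal.ofReal |cdf μ t - cdf ν t|)
      ≤ ∫⁻ p, ENNReal.ofReal |p.1 - p.2| ∂γ := by
  have hμ : ∀ t, μ (Set.Iic t) = γ {p : ℝ × ℝ | p.1 ≤ t} := by
    intro t
    rw [← hγ₁, Measure.map_apply measurable_fst measurableSet_Iic]
    rfl
  have hν : ∀ t, ν (Set.Iic t) = γ {p : ℝ × ℝ | p.2 ≤ t} := by
    intro t
    rw [← hγ₂, Measure.map_apply measurable_snd measurableSet_Iic]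
    rfl
  have hsub1 : ∀ t, γ {p : ℝ × ℝ | p.1 ≤ t}
      ≤ γ {p : ℝ × ℝ | p.1 ≤ t ∧ t < p.2} + γ {p : ℝ × ℝ | p.2 ≤ t} := by
    intro t
    refine le_trans (measure_mono ?_) (measure_union_le _ _)
    intro p hp
    rcases le_or_gt p.2 t with h | h
    · exact Or.inr h
    · exact Or.inl ⟨hp, h⟩
  have hsub2 : ∀ t, γ {p : ℝ × ℝ | p.2 ≤ t}
      ≤ γ {p : ℝ × ℝ | p.2 ≤ t ∧ t < p.1} + γ {p : ℝ × ℝ | p.1 ≤ t} := by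
    intro t
    refine le_trans (measure_mono ?_) (measure_union_le _ _)
    intro p hp
    rcases le_or_gt p.1 t with h | h
    · exact Or.inr h
    · exact Or.inl ⟨hp, h⟩
  have hA : ∀ t, ENNReal.ofReal |cdf μ t - cdf ν t|
      ≤ γ {p : ℝ × ℝ | p.1 ≤ t ∧ t < p.2} + γ {p : ℝ × ℝ | p.2 ≤ t ∧ t < p.1} := by
    intro t
    have hμ' : ENNReal.ofReal (cdf μ t) = μ (Set.Iic t) := by
      rw [cdf_eq_real, measureReal_def, ENNReal.ofReal_toReal (measure_ne_top _ _)]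
    have hν' : ENNReal.ofReal (cdf ν t) = ν (Set.Iic t) := by
      rw [cdf_eq_real, measureReal_def, ENNReal.ofReal_toReal (measure_ne_top _ _)]
    rcases abs_cases (cdf μ t - cdf ν t) with ⟨h, _⟩ | ⟨h, _⟩
    · rw [h, ENNReal.ofReal_sub _ (cdf_nonneg ν t), hμ', hν', hμ, hν]
      exact le_trans (tsub_le_iff_right.mpr (hsub1 t)) le_self_add
    · rw [h, neg_sub, ENNReal.ofReal_sub _ (cdf_nonneg μ t), hμ', hν', hμ, hν]
      exact le_trans (tsub_le_iff_right.mpr (hsub2 t)) le_add_self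
  have hm1 : Measurable fun t => γ {p : ℝ × ℝ | p.1 ≤ t ∧ t < p.2} :=
    measurable_measure_prodMk_left
      ((measurableSet_le measurable_snd.fst measurable_fst).inter
        (measurableSet_lt measurable_fst measurable_snd.snd))
  calc (∫⁻ t, ENNReal.ofReal |cdf μ t - cdf ν t|)
      ≤ ∫⁻ t, (γ {p : ℝ × ℝ | p.1 ≤ t ∧ t < p.2} + γ {p : ℝ × ℝ | p.2 ≤ t ∧ t < p.1}) :=
        lintegral_mono hA
    _ = (∫⁻ t, γ {p : ℝ × ℝ | p.1 ≤ t ∧ t < p.2})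
        + ∫⁻ t, γ {p : ℝ × ℝ | p.2 ≤ t ∧ t < p.1} := lintegral_add_left hm1 _
    _ = (∫⁻ p, ENNReal.ofReal (p.2 - p.1) ∂γ) + ∫⁻ p, ENNReal.ofReal (p.1 - p.2) ∂γ := by
        rw [coupling_fubini_aux γ, coupling_fubini_aux' γ]
    _ = ∫⁻ p, (ENNReal.ofReal (p.2 - p.1) + ENNReal.ofReal (p.1 - p.2)) ∂γ := by
        rw [← lintegral_add_left]
        exact (measurable_snd.sub measurable_fst).ennreal_ofReal
    _ = ∫⁻ p, ENNReal.ofReal |p.1 - p.2| ∂γ := by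
        refine lintegral_congr fun p => ?_
        rcases le_total p.1 p.2 with h | h
        · rw [ENNReal.ofReal_eq_zero.mpr (by linarith : p.1 - p.2 ≤ 0), add_zero,
            abs_of_nonpos (by linarith : p.1 - p.2 ≤ 0), neg_sub]
        · rw [ENNReal.ofReal_eq_zero.mpr (by linarith : p.2 - p.1 ≤ 0), zero_add,
            abs_of_nonneg (by linarith : (0:ℝ) ≤ p.1 - p.2)]
end

section
/- Let μ and ν be probability measures on ℝ with cumulative distribution functions F_μ and F_ν, and define the quantile (generalized inverse) functions Q_μ(u) = sInf {x : F_μ(x) ≥ u} and Q_ν(u) = sInf {x : F_ν(x) ≥ u} for u ∈ (0, 1). Then ∫₀¹ |Q_μ(u) − Q_ν(u)| du = ∫ℝ |F_μ(t) − F_ν(t)| dt. -/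
open MeasureTheory ProbabilityTheory

/-- The quantile function (generalized inverse of the cumulative distribution function)
of a probability measure on `ℝ`. -/
noncomputable def quantile (μ : Measure ℝ) (u : ℝ) : ℝ :=
  sInf {x : ℝ | u ≤ cdf μ x}

open Set Filter

lemma quantile_le_iff (μ : Measure ℝ) [IsProbabilityMeasure μ] {u t : ℝ}
    (h0 : 0 < u) (h1 : u < 1) : quantile μ u ≤ t ↔ u ≤ cdf μ t := by
  set S := {x : ℝ | u ≤ cdf μ x} with hS
  have hne : S.Nonempty := ((tendsto_cdf_atTop μ).eventually (eventually_ge_nhds h1)).exists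
  have hbdd : BddBelow S := by
    obtain ⟨x0, hx0⟩ := ((tendsto_cdf_atBot μ).eventually (eventually_lt_nhds h0)).exists
    refine ⟨x0, fun x hx => ?_⟩
    by_contra h
    push_neg at h
    exact absurd (((cdf μ).mono h.le).trans_lt hx0) (not_lt.2 hx)
  have hmem : u ≤ cdf μ (sInf S) := by
    have h2 : ∀ x ∈ Set.Ioi (sInf S), u ≤ cdf μ x := by
      intro x hx
      obtain ⟨s, hs, hsx⟩ := (csInf_lt_iff hbdd hne).mp hx
      exact hs.trans ((cdf μ).mono hsx.le)
    have htd : Filter.Tendsto (cdf μ) (nhdsWithin (sInf S) (Set.Ioi (sInf S)))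
        (nhds (cdf μ (sInf S))) :=
      ((cdf μ).right_continuous (sInf S)).mono_left
        (nhdsWithin_mono _ Set.Ioi_subset_Ici_self)
    exact ge_of_tendsto htd (eventually_nhdsWithin_of_forall h2)
  constructor
  · intro h
    exact hmem.trans ((cdf μ).mono h)
  · intro h
    exact csInf_le hbdd h

/-- The `L¹` distance on `(0, 1)` between the quantile functions of two probability
measures on `ℝ` equals the `L¹` distance on `ℝ` between their cumulative distribution
functions.  This identity underlies the closed-form 1-dimensional Wasserstein-1 distance
`W₁(μ, ν) = ∫₀¹ |F_μ⁻¹(u) - F_ν⁻¹(u)| du = ∫ |F_μ(t) - F_ν(t)| dt`. -/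
theorem quantile_l1_eq_cdf_l1
    (μ ν : Measure ℝ) [IsProbabilityMeasure μ] [IsProbabilityMeasure ν] :
    (∫⁻ u in Set.Ioo (0 : ℝ) 1, ENNReal.ofReal |quantile μ u - quantile ν u|)
      = ∫⁻ t, ENNReal.ofReal |cdf μ t - cdf ν t| := by
  set A : Set (ℝ × ℝ) :=
    {p | p.1 ≤ cdf μ p.2 ∧ cdf ν p.2 < p.1} ∪ {p | p.1 ≤ cdf ν p.2 ∧ cdf μ p.2 < p.1} with hA_def
  have hA : MeasurableSet A := by
    apply MeasurableSet.union
    · exact (measurableSet_le measurable_fst ((cdf μ).mono.measurable.comp measurable_snd)).inter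
        (measurableSet_lt ((cdf ν).mono.measurable.comp measurable_snd) measurable_fst)
    · exact (measurableSet_le measurable_fst ((cdf ν).mono.measurable.comp measurable_snd)).inter
        (measurableSet_lt ((cdf μ).mono.measurable.comp measurable_snd) measurable_fst)
  have hsliceU : ∀ u ∈ Set.Ioo (0:ℝ) 1,
      volume {t : ℝ | (u, t) ∈ A} = ENNReal.ofReal |quantile μ u - quantile ν u| := by
    intro u hu
    have hμ : ∀ t : ℝ, quantile μ u ≤ t ↔ u ≤ cdf μ t := fun t => quantile_le_iff μ hu.1 hu.2
    have hν : ∀ t : ℝ, quantile ν u ≤ t ↔ u ≤ cdf ν t := fun t => quantile_le_iff ν hu.1 hu.2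
    have hset : {t : ℝ | (u, t) ∈ A} =
        Set.Ico (quantile μ u) (quantile ν u) ∪ Set.Ico (quantile ν u) (quantile μ u) := by
      ext t
      have e1 : (cdf ν t < u) ↔ (t < quantile ν u) := by
        rw [← not_le, ← not_le, hν]
      have e2 : (cdf μ t < u) ↔ (t < quantile μ u) := by
        rw [← not_le, ← not_le, hμ]
      simp only [hA_def, Set.mem_setOf_eq, Set.mem_union, Set.mem_Ico, ← hμ, ← hν, e1, e2]
    rw [hset]
    rcases le_total (quantile μ u) (quantile ν u) with h | h
    · rw [Set.Ico_eq_empty (not_lt.2 h), Set.union_empty, Real.volume_Ico,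
        abs_sub_comm, abs_of_nonneg (sub_nonneg.2 h)]
    · rw [Set.Ico_eq_empty (not_lt.2 h), Set.empty_union, Real.volume_Ico,
        abs_of_nonneg (sub_nonneg.2 h)]
  have hsliceT : ∀ t : ℝ,
      volume (Set.Ioo (0:ℝ) 1 ∩ {u : ℝ | (u, t) ∈ A}) = ENNReal.ofReal |cdf μ t - cdf ν t| := by
    intro t
    have hset : {u : ℝ | (u, t) ∈ A} =
        Set.Ioc (cdf ν t) (cdf μ t) ∪ Set.Ioc (cdf μ t) (cdf ν t) := by
      ext u
      simp only [hA_def, Set.mem_setOf_eq, Set.mem_union, Set.mem_Ioc]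
      tauto
    have key : ∀ a b : ℝ, 0 ≤ a → b ≤ 1 → a ≤ b →
        volume (Set.Ioo (0:ℝ) 1 ∩ Set.Ioc a b) = ENNReal.ofReal (b - a) := by
      intro a b ha hb hab
      have h1 : Set.Ioo a b ⊆ Set.Ioo (0:ℝ) 1 ∩ Set.Ioc a b := by
        intro x hx
        exact ⟨⟨ha.trans_lt hx.1, hx.2.trans_le hb⟩, hx.1, hx.2.le⟩
      have h2 : Set.Ioo (0:ℝ) 1 ∩ Set.Ioc a b ⊆ Set.Ioc a b := Set.inter_subset_right
      refine le_antisymm ?_ ?_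
      · calc volume (Set.Ioo (0:ℝ) 1 ∩ Set.Ioc a b) ≤ volume (Set.Ioc a b) :=
              measure_mono h2
          _ = ENNReal.ofReal (b - a) := Real.volume_Ioc
      · calc ENNReal.ofReal (b - a) = volume (Set.Ioo a b) := Real.volume_Ioo.symm
          _ ≤ _ := measure_mono h1
    rw [hset]
    rcases le_total (cdf ν t) (cdf μ t) with h | h
    · rw [Set.Ioc_eq_empty (not_lt.2 h), Set.union_empty,
        key _ _ (cdf_nonneg ν t) (cdf_le_one μ t) h, abs_of_nonneg (sub_nonneg.2 h)]
    · rw [Set.Ioc_eq_empty (not_lt.2 h), Set.empty_union,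
        key _ _ (cdf_nonneg μ t) (cdf_le_one ν t) h, abs_sub_comm,
        abs_of_nonneg (sub_nonneg.2 h)]
  have hsliceU_meas : ∀ u : ℝ, MeasurableSet {t : ℝ | (u, t) ∈ A} :=
    fun u => hA.preimage (measurable_const.prodMk measurable_id)
  have hsliceT_meas : ∀ t : ℝ, MeasurableSet {u : ℝ | (u, t) ∈ A} :=
    fun t => hA.preimage (measurable_id.prodMk measurable_const)
  calc (∫⁻ u in Set.Ioo (0 : ℝ) 1, ENNReal.ofReal |quantile μ u - quantile ν u|)
      = ∫⁻ u in Set.Ioo (0 : ℝ) 1, volume {t : ℝ | (u, t) ∈ A} := by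
        refine setLIntegral_congr_fun measurableSet_Ioo ?_
        exact fun u hu => (hsliceU u hu).symm
    _ = ((volume.restrict (Set.Ioo (0:ℝ) 1)).prod volume) A := (Measure.prod_apply hA).symm
    _ = ∫⁻ t, (volume.restrict (Set.Ioo (0:ℝ) 1)) {u : ℝ | (u, t) ∈ A} :=
        Measure.prod_apply_symm hA
    _ = ∫⁻ t, volume (Set.Ioo (0:ℝ) 1 ∩ {u : ℝ | (u, t) ∈ A}) := by
        refine lintegral_congr fun t => ?_
        rw [Measure.restrict_apply (hsliceT_meas t), Set.inter_comm]
    _ = ∫⁻ t, ENNReal.ofReal |cdf μ t - cdf ν t| := lintegral_congr fun t => hsliceT t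
end

section
/- Let m ∈ ℝ, v > 0, and K ∈ ℝ. Then ∫ max(x − K, 0) dN(m, v)(x) = (m − K)·Φ((m − K)/√v) + √v·φ((m − K)/√v), where Φ is the cumulative distribution function of the standard Gaussian N(0, 1) and φ(z) = exp(−z²/2)/√(2π) is its density. In particular, for the Brownian motion with drift S_t = S_0 + μt + B_t, the risk-neutral price of a European call with strike K and maturity T, namely ∫ max(x − K, 0) dN(S_0, T)(x), equals (S_0 − K)·Φ((S_0 − K)/√T) + √T·φ((S_0 − K)/√T), independently of the drift μ. -/
open MeasureTheory ProbabilityTheory Real Set Filter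

noncomputable def stdPhi (z : ℝ) : ℝ := Real.exp (-z ^ 2 / 2) / Real.sqrt (2 * Real.pi)

lemma gaussianPDFReal_zero_one (z : ℝ) : gaussianPDFReal 0 1 z = stdPhi z := by
  simp [gaussianPDFReal, stdPhi, div_eq_mul_inv, mul_comm]

lemma stdPhi_nonneg (z : ℝ) : 0 ≤ stdPhi z := by
  unfold stdPhi
  positivity

lemma integrable_stdPhi : Integrable stdPhi := by
  have h := (integrable_exp_neg_mul_sq (b := (1/2 : ℝ)) (by norm_num)).div_const
    (Real.sqrt (2 * Real.pi))
  refine h.congr (Filter.Eventually.of_forall fun z => ?_)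
  unfold stdPhi
  ring_nf

lemma integrable_id_mul_stdPhi : Integrable (fun z => z * stdPhi z) := by
  have h := (integrable_mul_exp_neg_mul_sq (b := (1/2 : ℝ)) (by norm_num)).div_const
    (Real.sqrt (2 * Real.pi))
  refine h.congr (Filter.Eventually.of_forall fun z => ?_)
  unfold stdPhi
  ring_nf

lemma integral_gaussian01 (g : ℝ → ℝ) :
    ∫ z, g z ∂(gaussianReal 0 1) = ∫ z, g z * stdPhi z := by
  rw [gaussianReal_of_var_ne_zero _ one_ne_zero]
  have h : gaussianPDF 0 1 = fun x => ((gaussianPDFReal 0 1 x).toNNReal : ENNReal) := rfl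
  rw [h, integral_withDensity_eq_integral_smul
    ((measurable_gaussianPDFReal 0 1).real_toNNReal) g]
  congr 1 with x
  rw [NNReal.smul_def, smul_eq_mul, Real.coe_toNNReal _ (gaussianPDFReal_nonneg 0 1 x),
    gaussianPDFReal_zero_one, mul_comm]

lemma stdPhi_hasDerivAt (x : ℝ) : HasDerivAt (fun z => -stdPhi z) (x * stdPhi x) x := by
  have h1 : HasDerivAt (fun z : ℝ => -z ^ 2 / 2) (-x) x := by
    have := ((hasDerivAt_pow 2 x).neg).div_const 2
    refine this.congr_deriv ?_
    ring
  have h2 := (Real.hasDerivAt_exp (-x ^ 2 / 2)).comp x h1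
  have h3 := (h2.div_const (Real.sqrt (2 * Real.pi))).neg
  refine h3.congr_deriv ?_
  unfold stdPhi
  field_simp

lemma tendsto_stdPhi_atTop : Tendsto (fun z => -stdPhi z) atTop (nhds 0) := by
  have h1 : Tendsto (fun z : ℝ => -z ^ 2 / 2) atTop atBot := by
    have h0 : Tendsto (fun z : ℝ => z ^ 2 / 2) atTop atTop :=
      (tendsto_pow_atTop two_ne_zero).atTop_div_const (by norm_num)
    have := tendsto_neg_atBot_iff.mpr h0
    refine this.congr fun z => by ring
  have h2 := (Real.tendsto_exp_atBot.comp h1).div_const (Real.sqrt (2 * Real.pi))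
  have := h2.neg
  simpa [stdPhi, Function.comp] using this

lemma integral_Ioi_id_mul_stdPhi (a : ℝ) : ∫ z in Ioi a, z * stdPhi z = stdPhi a := by
  have := integral_Ioi_of_hasDerivAt_of_tendsto' (f := fun z => -stdPhi z)
    (f' := fun z => z * stdPhi z) (a := a) (m := 0)
    (fun x _ => stdPhi_hasDerivAt x) integrable_id_mul_stdPhi.integrableOn
    tendsto_stdPhi_atTop
  simpa using this

lemma gaussianReal01_Iic (d : ℝ) :
    cdf (gaussianReal 0 1) d = ∫ z in Ioi (-d), stdPhi z := by
  have hmap : (gaussianReal 0 1).map (fun x : ℝ => (-1 : ℝ) * x) = gaussianReal 0 1 := by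
    rw [gaussianReal_map_const_mul (-1 : ℝ)]
    norm_num
  have hpre : (fun x : ℝ => (-1 : ℝ) * x) ⁻¹' (Iic d) = Ici (-d) := by
    ext x
    simp [neg_le]
  have h1 : gaussianReal 0 1 (Iic d) = gaussianReal 0 1 (Ici (-d)) := by
    conv_lhs => rw [← hmap]
    rw [Measure.map_apply (by fun_prop) measurableSet_Iic, hpre]
  have hsing : gaussianReal 0 1 {(-d : ℝ)} = 0 :=
    (gaussianReal_absolutelyContinuous 0 one_ne_zero) Real.volume_singleton
  have h2 : gaussianReal 0 1 (Ici (-d)) = gaussianReal 0 1 (Ioi (-d)) := by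
    rw [← Ioi_union_left]
    refine le_antisymm ?_ (measure_mono subset_union_left)
    calc gaussianReal 0 1 (Ioi (-d) ∪ {-d}) ≤ gaussianReal 0 1 (Ioi (-d)) + gaussianReal 0 1 {-d} :=
          measure_union_le _ _
      _ = gaussianReal 0 1 (Ioi (-d)) := by rw [hsing, add_zero]
  rw [cdf_eq_real, measureReal_def, h1, h2, gaussianReal_apply_eq_integral _ one_ne_zero,
    ENNReal.toReal_ofReal]
  · exact setIntegral_congr_fun measurableSet_Ioi fun z _ => gaussianPDFReal_zero_one z
  · exact setIntegral_nonneg measurableSet_Ioi fun z _ => gaussianPDFReal_nonneg 0 1 z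

/-- The Bachelier formula: the expected European call payoff with strike `K` under the
Gaussian measure `N(m, v)` (with `v > 0`) is
`(m - K) * Φ((m - K) / √v) + √v * φ((m - K) / √v)`, where `Φ` is the standard Gaussian
cumulative distribution function and `φ(z) = exp (-z² / 2) / √(2π)` its density.  For a
Brownian motion with drift started at `S₀`, the risk-neutral call price is this formula
with `m = S₀` and `v = T`, independently of the drift. -/
theorem bachelier_call_price (m : ℝ) (v : ℝ) (hv : 0 < v) (K : ℝ) :
    ∫ x, max (x - K) 0 ∂(gaussianReal m v.toNNReal)
      = (m - K) * cdf (gaussianReal 0 1) ((m - K) / Real.sqrt v)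
        + Real.sqrt v
          * (Real.exp (-((m - K) / Real.sqrt v) ^ 2 / 2) / Real.sqrt (2 * Real.pi)) := by
  set s := Real.sqrt v with hs_def
  have hs : 0 < s := Real.sqrt_pos.mpr hv
  set d := (m - K) / s with hd_def
  have hsd : s * d = m - K := by rw [hd_def]; field_simp
  -- The measure `N(m, v)` is the image of `N(0, 1)` by `z ↦ s z + m`.
  have h1 : (gaussianReal 0 1).map (s * ·) = gaussianReal 0 v.toNNReal := by
    rw [gaussianReal_map_const_mul s]
    congr 1
    · ring
    · rw [mul_one]
      ext
      rw [NNReal.coe_mk, Real.coe_toNNReal _ hv.le, hs_def, Real.sq_sqrt hv.le]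
  have hmap : (gaussianReal 0 1).map (fun z => s * z + m) = gaussianReal m v.toNNReal := by
    rw [show (fun z : ℝ => s * z + m) = (· + m) ∘ (s * ·) from rfl,
      ← Measure.map_map (measurable_add_const m) (measurable_const_mul s), h1,
      gaussianReal_map_add_const m, zero_add]
  have hfc : Continuous fun x : ℝ => max (x - K) 0 :=
    (continuous_id.sub continuous_const).max continuous_const
  rw [← hmap, integral_map (by fun_prop) hfc.aestronglyMeasurable]
  have hpt : ∀ z : ℝ, max (s * z + m - K) 0 = s * max (z + d) 0 := by
    intro z
    rw [mul_max_of_nonneg _ _ hs.le, mul_zero]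
    congr 1
    rw [mul_add, hsd]
    ring
  simp_rw [hpt]
  rw [integral_const_mul, integral_gaussian01]
  have hind : (fun z => max (z + d) 0 * stdPhi z)
      = Set.indicator (Set.Ioi (-d)) (fun z => (z + d) * stdPhi z) := by
    ext z
    by_cases hz : z ∈ Set.Ioi (-d)
    · rw [Set.indicator_of_mem hz]
      have : (0 : ℝ) ≤ z + d := by simp only [Set.mem_Ioi] at hz; linarith
      rw [max_eq_left this]
    · rw [Set.indicator_of_notMem hz]
      have : z + d ≤ 0 := by simp only [Set.mem_Ioi, not_lt] at hz; linarith
      rw [max_eq_right this, zero_mul]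
  rw [hind, integral_indicator measurableSet_Ioi]
  have hsplit : ∫ z in Set.Ioi (-d), (z + d) * stdPhi z
      = (∫ z in Set.Ioi (-d), z * stdPhi z) + ∫ z in Set.Ioi (-d), d * stdPhi z := by
    rw [← integral_add integrable_id_mul_stdPhi.integrableOn
      ((integrable_stdPhi.integrableOn).const_mul d)]
    congr 1 with z
    ring
  rw [hsplit, integral_Ioi_id_mul_stdPhi, integral_const_mul, ← gaussianReal01_Iic]
  have hphi : stdPhi (-d) = Real.exp (-d ^ 2 / 2) / Real.sqrt (2 * Real.pi) := by
    simp [stdPhi, neg_sq]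
  rw [hphi]
  rw [mul_add, ← mul_assoc, hsd]
  ring
end
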